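/- The order on k-germs defined by comparing at the highest differing index is a linear order, and the resulting order-isomorphism gives a bijection from {0, 1, ..., C_k - 1} onto the set of k-germs. -/

import Mathlib

def IsGermF (k : ℕ) (a : ℕ → ℕ) : Prop :=
  a 0 = 0 ∧ (∀ i, k ≤ i → a i = 0) ∧ a (k - 1) ≤ 1 ∧
    ∀ i, 1 < i → i < k → a (i - 1) ≤ a i + 1

def GermLt (a b : ℕ → ℕ) : Prop := ∃ i, a i < b i ∧ ∀ j, i < j → a j = b j

/-!
Germs vanish from index `k` on, so two distinct germs have a highest index where they differ,
which makes the order total.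

For counting, let `c n m` be the number of `(n + 1)`-germs whose top entry is only bounded by
`m + 1`, as if it followed an entry `m`. Splitting off the top entry `x ≤ m + 1` gives
`c (n + 1) m = ∑_{x ≤ m + 1} c n x` and `c 0 m = 1`. Since the Catalan series satisfies
`C = 1 + X C²`, the telescoping identity `C^(m+2) = 1 + X ∑_{x ≤ m+1} C^(x+2)` shows that
`c n m` is the `n`-th coefficient of `C^(m+2)`; for `m = 0` this is `C_(n+1)`.
-/

open Finset PowerSeries

theorem germLt_irrefl (a : ℕ → ℕ) : ¬GermLt a a :=
  fun ⟨_, hlt, _⟩ => lt_irrefl _ hlt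

theorem GermLt.trans {a b c : ℕ → ℕ} : GermLt a b → GermLt b c → GermLt a c := by
  rintro ⟨i, hab, ha⟩ ⟨i', hbc, hb⟩
  rcases lt_trichotomy i i' with h | rfl | h
  · exact ⟨i', ha i' h ▸ hbc, fun j hj => (ha j (h.trans hj)).trans (hb j hj)⟩
  · exact ⟨i, hab.trans hbc, fun j hj => (ha j hj).trans (hb j hj)⟩
  · exact ⟨i, hb i h ▸ hab, fun j hj => (ha j hj).trans (hb j (h.trans hj))⟩

theorem eq_of_not_germLt_of_not_germLt {a b : ℕ → ℕ} (k : ℕ) (h : ∀ i, k ≤ i → a i = b i)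
    (hab : ¬GermLt a b) (hba : ¬GermLt b a) : a = b := by
  induction k with
  | zero => exact funext fun i => h i i.zero_le
  | succ k ih =>
    refine ih fun i hi => hi.eq_or_lt.elim (fun hki => hki ▸ ?_) (h i)
    rcases lt_trichotomy (a k) (b k) with hlt | heq | hgt
    · exact absurd ⟨k, hlt, h⟩ hab
    · exact heq
    · exact absurd ⟨k, hgt, fun j hj => (h j hj).symm⟩ hba

theorem isStrictTotalOrder_germLt (k : ℕ) :
    IsStrictTotalOrder {a : ℕ → ℕ // IsGermF k a} (fun x y => GermLt x.1 y.1) where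
  trichotomous x y := fun hxy hyx => Subtype.ext <|
    eq_of_not_germLt_of_not_germLt k (fun i hi => (x.2.2.1 i hi).trans (y.2.2.1 i hi).symm)
      hxy hyx
  irrefl x := germLt_irrefl x.1
  trans _ _ _ := GermLt.trans

/-- A `k`-germ continuing a virtual entry `a k = m`: the top entry is only bounded by `m + 1`. -/
def IsGermBelow (k m : ℕ) (a : ℕ → ℕ) : Prop :=
  a 0 = 0 ∧ (∀ i, k ≤ i → a i = 0) ∧ a (k - 1) ≤ m + 1 ∧
    ∀ i, 1 < i → i < k → a (i - 1) ≤ a i + 1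

theorem isGermBelow_zero (k : ℕ) : IsGermBelow k 0 = IsGermF k := rfl

theorem IsGermBelow.eq_zero {k m : ℕ} {a : ℕ → ℕ} (hk : k ≤ 1) (ha : IsGermBelow k m a) :
    a = 0 :=
  funext fun i => (Nat.eq_zero_or_pos i).elim (· ▸ ha.1) fun hi => ha.2.1 i (by omega)

theorem card_germBelow_of_le_one {k : ℕ} (m : ℕ) (hk : k ≤ 1) :
    Nat.card {a : ℕ → ℕ // IsGermBelow k m a} = 1 :=
  Nat.card_eq_one_iff_exists.2 ⟨⟨0, by simp [IsGermBelow]⟩,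
    fun a => Subtype.ext (a.2.eq_zero hk)⟩

theorem IsGermBelow.update_zero {n m : ℕ} {a : ℕ → ℕ} (ha : IsGermBelow (n + 2) m a) :
    IsGermBelow (n + 1) (a (n + 1)) (Function.update a (n + 1) 0) := by
  obtain ⟨h0, htop, -, hstep⟩ := ha
  refine ⟨by simp [h0], fun i hi => ?_, ?_, fun i hi hik => ?_⟩ <;>
    simp only [Function.update_apply]
  · split_ifs
    exacts [rfl, htop i (by omega)]
  · rw [if_neg (by omega), Nat.add_sub_cancel]
    rcases n.eq_zero_or_pos with rfl | hn
    · simp [h0]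
    · exact hstep (n + 1) (by omega) (by omega)
  · rw [if_neg (by omega), if_neg (by omega)]
    exact hstep i hi (by omega)

theorem IsGermBelow.update {n m x : ℕ} {a : ℕ → ℕ} (hx : x ≤ m + 1)
    (ha : IsGermBelow (n + 1) x a) : IsGermBelow (n + 2) m (Function.update a (n + 1) x) := by
  obtain ⟨h0, htop, hx', hstep⟩ := ha
  refine ⟨by simp [h0], fun i hi => ?_, by simpa using hx, fun i hi hik => ?_⟩ <;>
    simp only [Function.update_apply]
  · rw [if_neg (by omega)]
    exact htop i (by omega)
  · rw [if_neg (by omega)]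
    split_ifs with h
    · subst h
      simpa using hx'
    · exact hstep i hi (by omega)

def germBelowSuccEquiv (n m : ℕ) : {a : ℕ → ℕ // IsGermBelow (n + 2) m a} ≃
    Σ x : Fin (m + 2), {a : ℕ → ℕ // IsGermBelow (n + 1) x a} where
  toFun a := ⟨⟨a.1 (n + 1), Nat.lt_succ_of_le a.2.2.2.1⟩,
    ⟨Function.update a.1 (n + 1) 0, a.2.update_zero⟩⟩
  invFun x := ⟨Function.update x.2.1 (n + 1) x.1, x.2.2.update (Nat.le_of_lt_succ x.1.2)⟩
  left_inv a := Subtype.ext <| by simp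
  right_inv x := Sigma.subtype_ext (Fin.ext <| by simp) <| by
    simpa using (x.2.2.2.1 (n + 1) le_rfl).symm

instance finite_germBelow : ∀ k m : ℕ, Finite {a : ℕ → ℕ // IsGermBelow k m a}
  | 0, m | 1, m => Nat.finite_of_card_ne_zero <| by simp [card_germBelow_of_le_one]
  | n + 2, m =>
    have := fun x : Fin (m + 2) => finite_germBelow (n + 1) x
    Finite.of_equiv _ (germBelowSuccEquiv n m).symm

theorem card_germBelow_add_two (n m : ℕ) :
    Nat.card {a : ℕ → ℕ // IsGermBelow (n + 2) m a} =
      ∑ x ∈ range (m + 2), Nat.card {a : ℕ → ℕ // IsGermBelow (n + 1) x a} := by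
  rw [Nat.card_congr (germBelowSuccEquiv n m), Nat.card_sigma,
    Fin.sum_univ_eq_sum_range (fun x => Nat.card {a : ℕ → ℕ // IsGermBelow (n + 1) x a})]

theorem catalanSeries_pow_succ (j : ℕ) :
    catalanSeries ^ (j + 1) = 1 + X * ∑ x ∈ range (j + 1), catalanSeries ^ (x + 2) := by
  induction j with
  | zero => simpa [add_comm, mul_comm] using catalanSeries_sq_mul_X_add_one.symm
  | succ j ih =>
    have hstep :
        catalanSeries ^ (j + 2) = catalanSeries ^ (j + 1) + X * catalanSeries ^ (j + 3) := by
      conv_lhs => rw [pow_succ]; arg 2; rw [← catalanSeries_sq_mul_X_add_one]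
      ring
    rw [hstep, ih, sum_range_succ _ (j + 1)]
    ring

theorem coeff_catalanSeries_sq (n : ℕ) : coeff n (catalanSeries ^ 2) = catalan (n + 1) := by
  rw [← catalanSeries_coeff]
  conv_rhs => rw [← catalanSeries_sq_mul_X_add_one]
  simp [coeff_succ_mul_X]

theorem eq_coeff_catalanSeries_pow {c : ℕ → ℕ → ℕ} (h0 : ∀ m, c 0 m = 1)
    (hsucc : ∀ n m, c (n + 1) m = ∑ x ∈ range (m + 2), c n x) (n m : ℕ) :
    c n m = coeff n (catalanSeries ^ (m + 2)) := by
  induction n generalizing m with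
  | zero => simp [h0, catalanSeries_constantCoeff]
  | succ n ih => simp [hsucc, ih, catalanSeries_pow_succ (m + 1), coeff_succ_X_mul]

theorem card_germ (k : ℕ) : Nat.card {a : ℕ → ℕ // IsGermF k a} = catalan k := by
  rw [← isGermBelow_zero]
  cases k with
  | zero => exact (card_germBelow_of_le_one 0 zero_le_one).trans catalan_zero.symm
  | succ n =>
    rw [← coeff_catalanSeries_sq]
    exact eq_coeff_catalanSeries_pow (c := fun n m => Nat.card {a // IsGermBelow (n + 1) m a})
      (fun m => card_germBelow_of_le_one m le_rfl) card_germBelow_add_two n 0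

theorem catalan_eq_factorial_div (k : ℕ) :
    catalan k = (2 * k).factorial / (k.factorial * (k + 1).factorial) := by
  rw [catalan_eq_centralBinom_div, Nat.centralBinom_eq_two_mul_choose,
    Nat.choose_eq_factorial_div_factorial (by omega), Nat.div_div_eq_div_mul,
    show 2 * k - k = k by omega, Nat.factorial_succ]
  ring_nf

theorem germOrder_linear_and_counting_general (k : ℕ) :
    IsStrictTotalOrder {a : ℕ → ℕ // IsGermF k a} (fun x y => GermLt x.1 y.1) ∧
    ∃ e : Fin ((2 * k).factorial / (k.factorial * (k + 1).factorial)) ≃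
        {a : ℕ → ℕ // IsGermF k a},
      ∀ m m', m < m' ↔ GermLt (e m).1 (e m').1 := by
  classical
  have hlin := isStrictTotalOrder_germLt k
  -- named because the subtype also carries the pointwise preorder of `ℕ → ℕ` as an instance
  let order := linearOrderOfSTO fun x y : {a : ℕ → ℕ // IsGermF k a} => GermLt x.1 y.1
  have : Finite {a : ℕ → ℕ // IsGermF k a} := by
    rw [← isGermBelow_zero]
    infer_instance
  let := Fintype.ofFinite {a : ℕ → ℕ // IsGermF k a}
  have hcard : Fintype.card {a : ℕ → ℕ // IsGermF k a} =
      (2 * k).factorial / (k.factorial * (k + 1).factorial) := by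
    rw [Fintype.card_eq_nat_card, card_germ, catalan_eq_factorial_div]
  let e := monoEquivOfFin _ hcard
  exact ⟨hlin, e.toEquiv, fun m m' => (@OrderIso.lt_iff_lt _ _ _ order.toPreorder e m m').symm⟩

/-- The order comparing germs at the highest differing index is a strict total order,
and counting in this order yields a bijection from `{0,...,C_k - 1}` onto the
set of `k`-germs. -/
theorem germOrder_linear_and_counting (k : ℕ) (hk : 1 ≤ k) :
    IsStrictTotalOrder {a : ℕ → ℕ // IsGermF k a} (fun x y => GermLt x.1 y.1) ∧
    ∃ e : Fin ((2 * k).factorial / (k.factorial * (k + 1).factorial)) ≃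
        {a : ℕ → ℕ // IsGermF k a},
      ∀ m m', m < m' ↔ GermLt (e m).1 (e m').1 :=
  germOrder_linear_and_counting_general k
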